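/- For every standard Young tableau T of skew shape λ/μ, the set R_NE = {Z ∈ Rp_SE(T) : Z is weakly northeast of Y}, where Y = pos_T(min Rc_SE(T)), contains no two vertically adjacent cells (no vertical 2×1 domino); consequently every connected component of R_NE is a single-row rectangle. Moreover, the entries of T in the cells of R_NE strictly increase from southwest to northeast. -/

import Mathlib

/-!
Common definitions for skew shapes, standard Young tableaux, the southeast
boundary, southeast min-unimodal sets, the southeast rotation `Rot_SE`,
balance, balance points, and the map `Θ`, following the paper.

Cells are pairs `(i, j) : ℕ × ℕ` (row `i` counted from the top, column `j`
counted from the left).  South means larger row index, east means larger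
column index.
-/

open scoped Classical

namespace SkewSE

abbrev Cell : Type := ℕ × ℕ

/-- `a` is weakly southwest of `b`: weakly south (row ≥) and weakly west (col ≤). -/
def weakSW (a b : Cell) : Prop := b.1 ≤ a.1 ∧ a.2 ≤ b.2

/-- `a` is strictly southwest of `b`: strictly south and strictly west. -/
def strictSW (a b : Cell) : Prop := b.1 < a.1 ∧ a.2 < b.2

/-- The (strict) southwest-to-northeast order on cells:
`a` comes before `b` if `a` is weakly southwest of `b` and `a ≠ b`. -/
def swLT (a b : Cell) : Prop := weakSW a b ∧ a ≠ b

/-- Two cells are adjacent if they share an edge. -/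
def adjacent (a b : Cell) : Prop :=
  (a.1 = b.1 ∧ (a.2 = b.2 + 1 ∨ b.2 = a.2 + 1)) ∨
  (a.2 = b.2 ∧ (a.1 = b.1 + 1 ∨ b.1 = a.1 + 1))

/-- `a` and `b` lie in the same connected component of the set of cells `P`
(with respect to edge-adjacency). -/
def sameComp (P : Finset Cell) (a b : Cell) : Prop :=
  a ∈ P ∧ b ∈ P ∧ Relation.ReflTransGen (fun x y => x ∈ P ∧ y ∈ P ∧ adjacent x y) a b

/-- The cells of the skew shape `λ/μ`. -/
def skewCells (lam mu : YoungDiagram) : Finset Cell := lam.cells \ mu.cells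

/-- `n = |λ/μ|`, the number of cells. -/
def numCells (lam mu : YoungDiagram) : ℕ := (skewCells lam mu).card

/-- A set of cells is a skew shape if it is the difference of two Young diagrams. -/
def IsSkewShape (P : Finset Cell) : Prop :=
  ∃ lam' mu' : YoungDiagram, mu' ≤ lam' ∧ P = lam'.cells \ mu'.cells

/-- A standard Young tableau of skew shape `λ/μ`: a bijective filling of the
cells by `{1,…,n}`, strictly increasing west-to-east along rows and
north-to-south down columns.  (Entries are `0` off the shape.) -/
structure SYT (lam mu : YoungDiagram) where
  entry : Cell → ℕ
  bijOn : Set.BijOn entry (skewCells lam mu : Set Cell)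
    ((Finset.Icc 1 (numCells lam mu) : Finset ℕ) : Set ℕ)
  row_lt : ∀ i j : ℕ, (i, j) ∈ skewCells lam mu → (i, j + 1) ∈ skewCells lam mu →
    entry (i, j) < entry (i, j + 1)
  col_lt : ∀ i j : ℕ, (i, j) ∈ skewCells lam mu → (i + 1, j) ∈ skewCells lam mu →
    entry (i, j) < entry (i + 1, j)
  zero_outside : ∀ c : Cell, c ∉ skewCells lam mu → entry c = 0

variable {lam mu : YoungDiagram}

/-- `pos T x` is the cell of `T` containing the entry `x`. -/
noncomputable def pos (T : SYT lam mu) (x : ℕ) : Cell :=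
  if h : ∃ c ∈ skewCells lam mu, T.entry c = x then h.choose else (0, 0)

/-- The southeast boundary of `λ/μ`: cells `(i,j)` with `(i+1, j+1) ∉ λ/μ`. -/
def SEboundary (lam mu : YoungDiagram) : Finset Cell :=
  (skewCells lam mu).filter (fun c => (c.1 + 1, c.2 + 1) ∉ skewCells lam mu)

/-- `S` is southeast min-unimodal in `T`: the cells `pos_T(S)` lie on the
southeast boundary, in a single connected component of `λ/μ`, are totally
ordered southwest-to-northeast, and the entries, read in the
southwest-to-northeast order of their cells, strictly decrease until
reaching `min S` and then strictly increase. -/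
def MinUnimodalSE (T : SYT lam mu) (S : Finset ℕ) : Prop :=
  ∃ hne : S.Nonempty,
    S ⊆ Finset.Icc 1 (numCells lam mu) ∧
    (∀ x ∈ S, pos T x ∈ SEboundary lam mu) ∧
    (∀ x ∈ S, ∀ y ∈ S, sameComp (skewCells lam mu) (pos T x) (pos T y)) ∧
    (∀ x ∈ S, ∀ y ∈ S, weakSW (pos T x) (pos T y) ∨ weakSW (pos T y) (pos T x)) ∧
    (∀ x ∈ S, ∀ y ∈ S, swLT (pos T x) (pos T y) →
      (weakSW (pos T y) (pos T (S.min' hne)) → y < x) ∧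
      (weakSW (pos T (S.min' hne)) (pos T x) → x < y))

/-- `k` such that `Rc_SE(T) = {n-k+1, …, n}`: the maximal `k ≥ 1` for which
this set is southeast min-unimodal in `T`. -/
noncomputable def kSE (T : SYT lam mu) : ℕ :=
  sSup {k : ℕ | 1 ≤ k ∧ k ≤ numCells lam mu ∧
    MinUnimodalSE T (Finset.Icc (numCells lam mu - k + 1) (numCells lam mu))}

/-- `Rc_SE(T) = {n-k+1, …, n}` with `k` maximal as above. -/
noncomputable def RcSE (T : SYT lam mu) : Finset ℕ :=
  Finset.Icc (numCells lam mu - kSE T + 1) (numCells lam mu)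

/-- `Rp_SE(T) = pos_T(Rc_SE(T))`. -/
noncomputable def RpSE (T : SYT lam mu) : Finset Cell := (RcSE T).image (pos T)

/-- `Y = pos_T(min Rc_SE(T))`. -/
noncomputable def Ycell (T : SYT lam mu) : Cell :=
  pos T (numCells lam mu - kSE T + 1)

/-- The position of the largest entry `n`. -/
noncomputable def posN (T : SYT lam mu) : Cell := pos T (numCells lam mu)

/-- `pos_T(n)` is the southwesternmost cell of `Rp_SE(T)`. -/
def SWmostAtN (T : SYT lam mu) : Prop := ∀ c ∈ RpSE T, weakSW (posN T) c

/-- `pos_T(n)` is the northeasternmost cell of `Rp_SE(T)`. -/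
def NEmostAtN (T : SYT lam mu) : Prop := ∀ c ∈ RpSE T, weakSW c (posN T)

/-- The southernmost cell of `P` in the column of `Y`. -/
noncomputable def southEnd (P : Finset Cell) (Y : Cell) : Cell :=
  if h : ∃ c ∈ P, c.2 = Y.2 ∧ ∀ d ∈ P, d.2 = Y.2 → d.1 ≤ c.1 then h.choose else Y

/-- The easternmost cell of `P` in the row of `Y`. -/
noncomputable def eastEnd (P : Finset Cell) (Y : Cell) : Cell :=
  if h : ∃ c ∈ P, c.1 = Y.1 ∧ ∀ d ∈ P, d.1 = Y.1 → d.2 ≤ c.2 then h.choose else Y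

/-- The southeast rotation endpoint `X` of `T`. -/
noncomputable def Xend (T : SYT lam mu) : Cell :=
  if SWmostAtN T then
    if ∃ c ∈ RpSE T, c.2 = (Ycell T).2 ∧ (Ycell T).1 < c.1 then
      southEnd (RpSE T) (Ycell T)
    else eastEnd (RpSE T) (Ycell T)
  else
    if ∃ c ∈ RpSE T, c.1 = (Ycell T).1 ∧ (Ycell T).2 < c.2 then
      eastEnd (RpSE T) (Ycell T)
    else southEnd (RpSE T) (Ycell T)

/-- The cells `Z_1, …, Z_j` of `Rp_SE(T)` lying weakly between `pos_T(n)`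
and `X` in the southwest-to-northeast order. -/
noncomputable def chainSE (T : SYT lam mu) : Finset Cell :=
  (RpSE T).filter (fun c =>
    (weakSW (posN T) c ∧ weakSW c (Xend T)) ∨ (weakSW (Xend T) c ∧ weakSW c (posN T)))

/-- The next cell of `P` after `c` in southwest-to-northeast order. -/
noncomputable def nextNE (P : Finset Cell) (c : Cell) : Cell :=
  if h : ∃ d ∈ P, swLT c d ∧ ∀ e ∈ P, swLT c e → weakSW d e then h.choose else c

/-- The next cell of `P` before `c` in southwest-to-northeast order. -/
noncomputable def nextSW (P : Finset Cell) (c : Cell) : Cell :=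
  if h : ∃ d ∈ P, swLT d c ∧ ∀ e ∈ P, swLT e c → weakSW e d then h.choose else c

/-- The filling `Rot_SE(T)` produced by the southeast rotation:
`n` moves to `X`, and the entries of the cells of `Rp_SE(T)` weakly between
`pos_T(n)` and `X` are each shifted one position towards `pos_T(n)`;
all other entries are unchanged. -/
noncomputable def rotEntry (T : SYT lam mu) (c : Cell) : ℕ :=
  if c ∈ chainSE T then
    if c = Xend T then numCells lam mu
    else if SWmostAtN T then T.entry (nextNE (chainSE T) c)
    else T.entry (nextSW (chainSE T) c)
  else T.entry c

/-- The southeast rotation as a map `SYT(λ/μ) → SYT(λ/μ)`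
(well-defined since the rotated filling is again standard). -/
noncomputable def RotSE (T : SYT lam mu) : SYT lam mu :=
  if h : ∃ R : SYT lam mu, R.entry = rotEntry T then h.choose else T

/-- The descent set `Des(T) = {i : pos_T(i+1) is strictly south of pos_T(i)}`. -/
noncomputable def Des (T : SYT lam mu) : Finset ℕ :=
  (Finset.Icc 1 (numCells lam mu - 1)).filter
    (fun i => (pos T i).1 < (pos T (i + 1)).1)

/-- `S` is balanced with respect to `W` in `U`: the entries in the cells of
`pos_U(S)` weakly northeast of `W` increase from southwest to northeast, and
the entries in the cells of `pos_U(S)` weakly southwest of `W` increase from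
northeast to southwest. -/
def Balanced (U : SYT lam mu) (S : Finset ℕ) (W : Cell) : Prop :=
  (∀ x ∈ S, ∀ y ∈ S, weakSW W (pos U x) → weakSW W (pos U y) →
    swLT (pos U x) (pos U y) → x < y) ∧
  (∀ x ∈ S, ∀ y ∈ S, weakSW (pos U x) W → weakSW (pos U y) W →
    swLT (pos U y) (pos U x) → x < y)

/-- `a` and `b` are distinct and consecutive in the southwest-to-northeast
order on the set of cells `Q`. -/
def consecutiveIn (Q : Finset Cell) (a b : Cell) : Prop :=
  a ∈ Q ∧ b ∈ Q ∧ (swLT a b ∨ swLT b a) ∧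
  ∀ c ∈ Q, ¬ (swLT a c ∧ swLT c b) ∧ ¬ (swLT b c ∧ swLT c a)

/-- The northern balance point of a southeast exterior corner `Z`: the cell
of the southeast boundary weakly due north of `Z` farthest from `Z`. -/
noncomputable def northBP (lam mu : YoungDiagram) (Z : Cell) : Cell :=
  if h : ∃ c ∈ SEboundary lam mu, c.2 = Z.2 ∧ c.1 ≤ Z.1 ∧
      ∀ d ∈ SEboundary lam mu, d.2 = Z.2 → d.1 ≤ Z.1 → c.1 ≤ d.1
  then h.choose else Z

/-- The western balance point of a southeast exterior corner `Z`: the cell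
of the southeast boundary weakly due west of `Z` farthest from `Z`. -/
noncomputable def westBP (lam mu : YoungDiagram) (Z : Cell) : Cell :=
  if h : ∃ c ∈ SEboundary lam mu, c.1 = Z.1 ∧ c.2 ≤ Z.2 ∧
      ∀ d ∈ SEboundary lam mu, d.1 = Z.1 → d.2 ≤ Z.2 → c.2 ≤ d.2
  then h.choose else Z

/-- Property (i) for `S = {n-1, …, n-k+1}` in `R`:
`S` is southeast min-unimodal in `R` and lies in the same connected
component of `λ/μ` as `pos_R(n)` (vacuous when `S` is empty, i.e. `k = 1`). -/
def PropI (R : SYT lam mu) (k : ℕ) : Prop :=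
  (Finset.Icc (numCells lam mu - k + 1) (numCells lam mu - 1)).Nonempty →
    MinUnimodalSE R (Finset.Icc (numCells lam mu - k + 1) (numCells lam mu - 1)) ∧
    ∀ x ∈ Finset.Icc (numCells lam mu - k + 1) (numCells lam mu - 1),
      sameComp (skewCells lam mu) (pos R x) (pos R (numCells lam mu))

/-- `pos_R(S)` contains the northern neighbor of `pos_R(n)`,
for `S = {n-1, …, n-k+1}`. -/
def hasNorthNbr (R : SYT lam mu) (k : ℕ) : Prop :=
  ∃ x ∈ Finset.Icc (numCells lam mu - k + 1) (numCells lam mu - 1),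
    (pos R x).2 = (pos R (numCells lam mu)).2 ∧
    (pos R x).1 + 1 = (pos R (numCells lam mu)).1

/-- `pos_R(S)` contains the western neighbor of `pos_R(n)`,
for `S = {n-1, …, n-k+1}`. -/
def hasWestNbr (R : SYT lam mu) (k : ℕ) : Prop :=
  ∃ x ∈ Finset.Icc (numCells lam mu - k + 1) (numCells lam mu - 1),
    (pos R x).1 = (pos R (numCells lam mu)).1 ∧
    (pos R x).2 + 1 = (pos R (numCells lam mu)).2

/-- Property (ii) for `S = {n-1, …, n-k+1}` in `R`. -/
def PropII (R : SYT lam mu) (k : ℕ) : Prop :=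
  ¬ (hasNorthNbr R k ∧ hasWestNbr R k) ∧
  (hasNorthNbr R k →
    Balanced R (Finset.Icc (numCells lam mu - k + 1) (numCells lam mu - 1))
      (northBP lam mu (pos R (numCells lam mu)))) ∧
  (hasWestNbr R k →
    Balanced R (Finset.Icc (numCells lam mu - k + 1) (numCells lam mu - 1))
      (westBP lam mu (pos R (numCells lam mu)))) ∧
  (¬ hasNorthNbr R k → ¬ hasWestNbr R k →
    Balanced R (Finset.Icc (numCells lam mu - k + 1) (numCells lam mu - 1))
      (northBP lam mu (pos R (numCells lam mu))) ∧
    Balanced R (Finset.Icc (numCells lam mu - k + 1) (numCells lam mu - 1))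
      (westBP lam mu (pos R (numCells lam mu))))

/-- The maximal `k` such that `S = {n-1, …, n-k+1}` satisfies properties
(i) and (ii) in `R`; used to define `Θ`. -/
noncomputable def kTheta (R : SYT lam mu) : ℕ :=
  sSup {k : ℕ | 1 ≤ k ∧ k ≤ numCells lam mu ∧ PropI R k ∧ PropII R k}

/-- The southwesternmost cell of `P`. -/
noncomputable def SWend (P : Finset Cell) : Cell :=
  if h : ∃ c ∈ P, ∀ d ∈ P, weakSW c d then h.choose else (0, 0)

/-- The northeasternmost cell of `P`. -/
noncomputable def NEend (P : Finset Cell) : Cell :=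
  if h : ∃ c ∈ P, ∀ d ∈ P, weakSW d c then h.choose else (0, 0)

/-- `P = pos_R({n, …, n-k+1})` for `k = kTheta R`. -/
noncomputable def PTheta (R : SYT lam mu) : Finset Cell :=
  (Finset.Icc (numCells lam mu - kTheta R + 1) (numCells lam mu)).image (pos R)

/-- `pos_R(n - k + 1)` for `k = kTheta R`. -/
noncomputable def posMTheta (R : SYT lam mu) : Cell :=
  pos R (numCells lam mu - kTheta R + 1)

/-- `Θ` moves `n` to the southwestern end exactly when: `pos_R(n)` and
`pos_R(n-k+1)` lie in different connected components of `P` and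
`pos_R(n-k+1)` is on the southwestern side, or they lie in the same
connected component and `pos_R(n-k+1)` is on the northeastern side. -/
def destIsSW (R : SYT lam mu) : Prop :=
  weakSW (posMTheta R) (posN R) ↔ ¬ sameComp (PTheta R) (posN R) (posMTheta R)

/-- The destination cell for `n` under `Θ`. -/
noncomputable def destTheta (R : SYT lam mu) : Cell :=
  if destIsSW R then SWend (PTheta R) else NEend (PTheta R)

/-- The cells of `P` weakly between the destination cell and `pos_R(n)`. -/
noncomputable def chainTheta (R : SYT lam mu) : Finset Cell :=
  (PTheta R).filter (fun c =>
    (weakSW (destTheta R) c ∧ weakSW c (posN R)) ∨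
    (weakSW (posN R) c ∧ weakSW c (destTheta R)))

/-- The filling `Θ(R)`: `n` moves from `pos_R(n)` to the destination cell,
and each entry occupying a cell of `P` strictly between them is shifted one
position in `P` closer to `pos_R(n)`; all other entries are unchanged. -/
noncomputable def thetaEntry (R : SYT lam mu) (c : Cell) : ℕ :=
  if c ∈ chainTheta R then
    if c = destTheta R then numCells lam mu
    else if destIsSW R then R.entry (nextSW (chainTheta R) c)
    else R.entry (nextNE (chainTheta R) c)
  else R.entry c

/-- The map `Θ` as a map on standard Young tableaux. -/
noncomputable def Theta (R : SYT lam mu) : SYT lam mu :=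
  if h : ∃ U : SYT lam mu, U.entry = thetaEntry R then h.choose else R

/-- A single-column rectangle with northern endpoint `Y` and southern endpoint `X`. -/
def IsColSeg (P : Finset Cell) (Y X : Cell) : Prop :=
  Y.2 = X.2 ∧ Y.1 ≤ X.1 ∧ P = (Finset.Icc Y.1 X.1).image (fun i => (i, Y.2))

/-- A single-row rectangle with western endpoint `Y` and eastern endpoint `X`. -/
def IsRowSeg (P : Finset Cell) (Y X : Cell) : Prop :=
  Y.1 = X.1 ∧ Y.2 ≤ X.2 ∧ P = (Finset.Icc Y.2 X.2).image (fun j => (Y.1, j))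

/-- A hook with northwestern corner `Y`, southern endpoint `A`, and eastern
endpoint `B` (both arms of positive length). -/
def IsHook (P : Finset Cell) (Y A B : Cell) : Prop :=
  A.2 = Y.2 ∧ Y.1 < A.1 ∧ B.1 = Y.1 ∧ Y.2 < B.2 ∧
  P = (Finset.Icc Y.1 A.1).image (fun i => (i, Y.2)) ∪
      (Finset.Icc Y.2 B.2).image (fun j => (Y.1, j))

end SkewSE

namespace SkewSE

/-- The set `R_NE` of cells of `Rp_SE(T)` weakly northeast of
`Y = pos_T(min Rc_SE(T))`. -/
noncomputable def RNEset {lam mu : YoungDiagram} (T : SYT lam mu) : Finset Cell :=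
  (RpSE T).filter (fun c => weakSW (Ycell T) c)

/- The whole statement comes down to the increasing half of min-unimodality: on the cells
of `Rp_SE(T)` weakly northeast of `Y` the entries increase from southwest to northeast.
Two vertically adjacent cells would then carry entries increasing northward, against column
strictness, and a set of cells without vertical dominoes has only horizontal segments as
connected components. -/

theorem sameComp.row_segment_of_no_vertical_domino {P : Finset Cell}
    (hP : ∀ c ∈ P, (c.1 + 1, c.2) ∉ P) {a b : Cell} (hab : sameComp P a b) :
    a.1 = b.1 ∧ ∀ j ∈ Set.uIcc a.2 b.2, (a.1, j) ∈ P := by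
  obtain ⟨ha, -, hpath⟩ := hab
  induction hpath with
  | refl =>
    refine ⟨rfl, fun j hj => ?_⟩
    rw [Set.uIcc_self, Set.mem_singleton_iff] at hj
    rwa [hj]
  | @tail b c _ hbc ih =>
    obtain ⟨hb, hc, hadj⟩ := hbc
    obtain ⟨hrow, hseg⟩ := ih
    rcases hadj with ⟨hbc_row, hbc_col⟩ | ⟨hbc_col, hbc_row⟩
    · refine ⟨hrow.trans hbc_row, fun j hj => ?_⟩
      by_cases hjb : j ∈ Set.uIcc a.2 b.2
      · exact hseg j hjb
      · rw [Set.mem_uIcc] at hj hjb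
        have hjc : j = c.2 := by omega
        rwa [hjc, hrow, hbc_row]
    · exfalso
      rcases hbc_row with h | h
      · exact hP c hc (by rwa [← h, ← hbc_col])
      · exact hP b hb (by rwa [← h, hbc_col])

variable {lam mu : YoungDiagram}

theorem pos_spec (T : SYT lam mu) {x : ℕ} (hx : x ∈ Finset.Icc 1 (numCells lam mu)) :
    pos T x ∈ skewCells lam mu ∧ T.entry (pos T x) = x := by
  have h : ∃ c ∈ skewCells lam mu, T.entry c = x := T.bijOn.surjOn (by exact_mod_cast hx)
  rw [pos, dif_pos h]
  exact h.choose_spec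

theorem no_vertical_domino_of_entry_lt (T : SYT lam mu) {P : Finset Cell}
    (hP : P ⊆ skewCells lam mu) (hlt : ∀ a ∈ P, ∀ b ∈ P, swLT a b → T.entry a < T.entry b) :
    ∀ c ∈ P, (c.1 + 1, c.2) ∉ P := by
  intro c hc hc'
  have hsw : swLT (c.1 + 1, c.2) c :=
    ⟨⟨Nat.le_succ _, le_rfl⟩, fun h => by simpa using congrArg Prod.fst h⟩
  have hcol := T.col_lt c.1 c.2 (hP hc) (hP hc')
  exact (hlt _ hc' _ hc hsw).not_gt hcol

theorem RcSE_subset_Icc (T : SYT lam mu) : RcSE T ⊆ Finset.Icc 1 (numCells lam mu) :=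
  Finset.Icc_subset_Icc (by omega) le_rfl

theorem min'_RcSE (T : SYT lam mu) (h : (RcSE T).Nonempty) :
    (RcSE T).min' h = numCells lam mu - kSE T + 1 :=
  le_antisymm (Finset.min'_le _ _ (Finset.mem_Icc.2 ⟨le_rfl, Finset.nonempty_Icc.1 h⟩))
    (Finset.mem_Icc.1 (Finset.min'_mem _ h)).1

/- `kSE` is an `sSup`, which is the junk value `0` when no `k` qualifies; then `RcSE T`
is empty. -/
theorem minUnimodalSE_RcSE (T : SYT lam mu) (h : (RcSE T).Nonempty) :
    MinUnimodalSE T (RcSE T) := by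
  have hk : kSE T ≠ 0 := by
    intro hk
    simp [RcSE, hk] at h
  have hne : {k : ℕ | 1 ≤ k ∧ k ≤ numCells lam mu ∧
      MinUnimodalSE T (Finset.Icc (numCells lam mu - k + 1) (numCells lam mu))}.Nonempty := by
    by_contra hempty
    rw [Set.not_nonempty_iff_eq_empty] at hempty
    exact hk (by rw [kSE, hempty, csSup_empty, Nat.bot_eq_zero])
  exact (Nat.sSup_mem hne ⟨numCells lam mu, fun _ hk => hk.2.1⟩).2.2

theorem MinUnimodalSE.lt_of_swLT_of_northeast_of_min {T : SYT lam mu} {S : Finset ℕ}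
    (hS : MinUnimodalSE T S) {x y : ℕ} (hx : x ∈ S) (hy : y ∈ S)
    (hmin : ∀ hne : S.Nonempty, weakSW (pos T (S.min' hne)) (pos T x))
    (hxy : swLT (pos T x) (pos T y)) : x < y := by
  obtain ⟨hne, -, -, -, -, hunimodal⟩ := hS
  exact (hunimodal x hx y hy hxy).2 (hmin hne)

theorem RNEset_subset_skewCells (T : SYT lam mu) : RNEset T ⊆ skewCells lam mu := by
  intro c hc
  simp only [RNEset, RpSE, Finset.mem_filter, Finset.mem_image] at hc
  obtain ⟨⟨x, hx, rfl⟩, -⟩ := hc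
  exact (pos_spec T (RcSE_subset_Icc T hx)).1

theorem RNEset_entry_lt (T : SYT lam mu) :
    ∀ a ∈ RNEset T, ∀ b ∈ RNEset T, swLT a b → T.entry a < T.entry b := by
  intro a ha b hb hab
  simp only [RNEset, RpSE, Finset.mem_filter, Finset.mem_image] at ha hb
  obtain ⟨⟨x, hx, rfl⟩, hYx⟩ := ha
  obtain ⟨⟨y, hy, rfl⟩, -⟩ := hb
  rw [(pos_spec T (RcSE_subset_Icc T hx)).2, (pos_spec T (RcSE_subset_Icc T hy)).2]
  refine (minUnimodalSE_RcSE T ⟨x, hx⟩).lt_of_swLT_of_northeast_of_min hx hy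
    (fun hne => ?_) hab
  rwa [min'_RcSE T hne]

theorem RNE_rows_general (lam mu : YoungDiagram) (T : SYT lam mu) :
    (∀ c ∈ RNEset T, (c.1 + 1, c.2) ∉ RNEset T) ∧
    (∀ a ∈ RNEset T, ∀ b ∈ RNEset T, sameComp (RNEset T) a b →
      a.1 = b.1 ∧ ∀ j : ℕ, a.2 ≤ j → j ≤ b.2 → (a.1, j) ∈ RNEset T) ∧
    (∀ a ∈ RNEset T, ∀ b ∈ RNEset T, swLT a b → T.entry a < T.entry b) := by
  have hlt := RNEset_entry_lt T
  have hdomino := no_vertical_domino_of_entry_lt T (RNEset_subset_skewCells T) hlt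
  refine ⟨hdomino, fun a _ b _ hab => ?_, hlt⟩
  obtain ⟨hrow, hseg⟩ := hab.row_segment_of_no_vertical_domino hdomino
  exact ⟨hrow, fun j haj hjb => hseg j (Set.mem_uIcc.2 (Or.inl ⟨haj, hjb⟩))⟩

/-- `R_NE` contains no vertical `2 × 1` domino, every
connected component of `R_NE` is a single-row rectangle, and the entries of
`T` in the cells of `R_NE` strictly increase from southwest to northeast. -/
theorem RNE_rows (lam mu : YoungDiagram) (hsub : mu ≤ lam) (T : SYT lam mu) :
    (∀ c ∈ RNEset T, (c.1 + 1, c.2) ∉ RNEset T) ∧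
    (∀ a ∈ RNEset T, ∀ b ∈ RNEset T, sameComp (RNEset T) a b →
      a.1 = b.1 ∧ ∀ j : ℕ, a.2 ≤ j → j ≤ b.2 → (a.1, j) ∈ RNEset T) ∧
    (∀ a ∈ RNEset T, ∀ b ∈ RNEset T, swLT a b → T.entry a < T.entry b) :=
  RNE_rows_general lam mu T

end SkewSE
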